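/- arXiv:0912.1972 — 3 statements merged into one kernel-verified Lean document; each statement's English description precedes it below -/
import Mathlib

section
/- For every finite family β_1, …, β_r of nonzero complex numbers there exists an integer n ≥ 1 such that Re(β_j^n) > 0 for every j ∈ {1, …, r}. -/
/-!
Write `β_j = |β_j| u_j` with `u_j` on the unit circle. In the compact group `(S¹)^r` the point `1`
is a cluster point of the powers of any element (pigeonhole on the powers, in topological form),
so some power `u^n` with `n ≥ 1` lies in the open neighbourhood `{z | ∀ j, 0 < Re z_j}` of `1`.
-/

open Filter Topology Complex

theorem exists_pos_pow_mem_of_mem_nhds_one {G : Type*} [Group G] [TopologicalSpace G]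
    [CompactSpace G] [IsTopologicalGroup G] (x : G) {U : Set G} (hU : U ∈ 𝓝 1) :
    ∃ n : ℕ, 1 ≤ n ∧ x ^ n ∈ U :=
  ((mapClusterPt_one_atTop_pow x).frequently hU).forall_exists_of_atTop 1

theorem exists_pos_pow_forall_re_pos {ι : Type*} [Finite ι] (u : ι → Circle) :
    ∃ n : ℕ, 1 ≤ n ∧ ∀ j, 0 < ((u j ^ n : Circle) : ℂ).re := by
  have hU : ∀ᶠ z : ι → Circle in 𝓝 1, ∀ j, 0 < ((z j : Circle) : ℂ).re := by
    refine eventually_all.2 fun j => ?_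
    have hcont : Continuous fun z : ι → Circle => ((z j : Circle) : ℂ).re := by fun_prop
    exact hcont.continuousAt.eventually (lt_mem_nhds (by simp))
  exact exists_pos_pow_mem_of_mem_nhds_one u hU

theorem Complex.re_pow_eq_norm_pow_mul_re_circleExp_arg_pow (z : ℂ) (n : ℕ) :
    (z ^ n).re = ‖z‖ ^ n * ((Circle.exp (arg z) ^ n : Circle) : ℂ).re := by
  conv_lhs => rw [← norm_mul_exp_arg_mul_I z]
  rw [mul_pow, ← ofReal_pow, re_ofReal_mul, Circle.coe_pow, Circle.coe_exp]

theorem exists_pow_re_pos (r : ℕ) (β : Fin r → ℂ) (hβ : ∀ j, β j ≠ 0) :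
    ∃ n : ℕ, 1 ≤ n ∧ ∀ j, 0 < ((β j) ^ n).re := by
  obtain ⟨n, hn, hre⟩ := exists_pos_pow_forall_re_pos fun j => Circle.exp (arg (β j))
  refine ⟨n, hn, fun j => ?_⟩
  rw [re_pow_eq_norm_pow_mul_re_circleExp_arg_pow]
  exact mul_pos (pow_pos (norm_pos_iff.2 (hβ j)) n) (hre j)
end

section
/- Let β_1, …, β_r be nonzero complex numbers such that for every integer n ≥ 1 one has Σ_{j=1}^r Re(β_j^n) ≤ 0. Then r = 0, i.e., the family is empty. -/
theorem eq_zero_of_sum_pow_re_nonpos (r : ℕ) (β : Fin r → ℂ) (hβ : ∀ j, β j ≠ 0)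
    (h : ∀ n : ℕ, 1 ≤ n → ∑ j, ((β j) ^ n).re ≤ 0) : r = 0 := by
  by_contra hr
  have hr' : 0 < r := Nat.pos_of_ne_zero hr
  set u : Fin r → ℂ := fun j => β j / (‖β j‖ : ℂ) with hu_def
  have hbnorm : ∀ j, (0:ℝ) < ‖β j‖ := fun j => norm_pos_iff.mpr (hβ j)
  have hnorm : ∀ j, ‖u j‖ = 1 := by
    intro j
    simp only [hu_def, norm_div, Complex.norm_real, Real.norm_eq_abs,
      abs_of_pos (hbnorm j)]
    exact div_self (ne_of_gt (hbnorm j))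
  set f : ℕ → (Fin r → ℂ) := fun n j => (u j) ^ n with hf_def
  have hmem : ∀ n, f n ∈ Metric.closedBall (0 : Fin r → ℂ) 1 := by
    intro n
    rw [Metric.mem_closedBall, dist_zero_right]
    refine pi_norm_le_iff_of_nonneg zero_le_one |>.mpr ?_
    intro j
    rw [norm_pow, hnorm j, one_pow]
  obtain ⟨a, -, φ, hφ, hconv⟩ :=
    (isCompact_closedBall (0 : Fin r → ℂ) 1).tendsto_subseq hmem
  have hc := hconv.cauchySeq
  rw [Metric.cauchySeq_iff'] at hc
  obtain ⟨N, hN⟩ := hc 1 one_pos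
  have hd := hN (N + 1) (Nat.le_succ N)
  set k : ℕ := φ (N + 1) - φ N with hk_def
  have hφlt : φ N < φ (N + 1) := hφ (Nat.lt_succ_self N)
  have hk1 : 1 ≤ k := by omega
  have hsplit : φ (N + 1) = φ N + k := by omega
  have key : ∀ j, ‖(u j) ^ k - 1‖ < 1 := by
    intro j
    have hdj : dist (f (φ (N + 1)) j) (f (φ N) j) < 1 :=
      lt_of_le_of_lt (dist_le_pi_dist _ _ j) (by simpa using hd)
    have : dist (f (φ (N + 1)) j) (f (φ N) j) = ‖(u j) ^ k - 1‖ := by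
      rw [dist_eq_norm]
      simp only [hf_def, hsplit, pow_add]
      rw [show (u j) ^ (φ N) * (u j) ^ k - (u j) ^ (φ N)
            = (u j) ^ (φ N) * ((u j) ^ k - 1) by ring,
        norm_mul, norm_pow, hnorm j, one_pow, one_mul]
    rwa [this] at hdj
  have hpos : ∀ j, (0:ℝ) < ((β j) ^ k).re := by
    intro j
    have h1 : ((u j) ^ k).re = 1 - (1 - (u j) ^ k).re := by
      simp [Complex.sub_re]
    have h2 : (1 - (u j) ^ k).re ≤ ‖1 - (u j) ^ k‖ := Complex.re_le_norm _
    have h3 : ‖1 - (u j) ^ k‖ < 1 := by rw [norm_sub_rev]; exact key j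
    have hure : (0:ℝ) < ((u j) ^ k).re := by rw [h1]; linarith
    have hbu : β j = (‖β j‖ : ℂ) * u j := by
      rw [hu_def]
      rw [mul_div_assoc', mul_comm, mul_div_assoc,
        div_self (Complex.ofReal_ne_zero.mpr (ne_of_gt (hbnorm j))), mul_one]
    rw [hbu, mul_pow, ← Complex.ofReal_pow, Complex.re_ofReal_mul]
    exact mul_pos (pow_pos (hbnorm j) k) hure
  have hsum : (0:ℝ) < ∑ j, ((β j) ^ k).re := by
    refine Finset.sum_pos (fun j _ => hpos j) ?_
    have : Nonempty (Fin r) := Fin.pos_iff_nonempty.mp hr'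
    exact Finset.univ_nonempty
  linarith [h k hk1]
end

section
/- Let q > 1 be a real number and let α_1, …, α_s and β_1, …, β_t be complex numbers, all of absolute value √q, such that {β_1, …, β_t} is a sub-multiset of {α_1, …, α_s} and for every integer n ≥ 1 the real number Σ_{i=1}^s Re(α_i^n) − Σ_{j=1}^t Re(β_j^n) is ≤ 0. Then s = t (so the two multisets coincide). -/
/-!
Dividing out the common part of the two multisets, the hypothesis says that the nonempty family
of nonzero numbers `α i`, `i ∉ range ι`, has power sums with nonpositive real part for `n ≥ 1`.
This is impossible: the multiples of the vector of arguments `(arg α i)` in the compact torus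
recur near `0`, so for some `n ≥ 1` all the `α i ^ n` lie in the open right half-plane.
-/

open Filter Function Set Topology

instance Real.Angle.instCompactSpace : CompactSpace Real.Angle :=
  haveI : Fact (0 < 2 * Real.pi) := ⟨Real.two_pi_pos⟩
  inferInstanceAs (CompactSpace (AddCircle (2 * Real.pi)))

theorem Real.Angle.exists_pos_forall_cos_nsmul_pos {ι : Type*} [Finite ι]
    (θ : ι → Real.Angle) : ∃ n : ℕ, 0 < n ∧ ∀ i, 0 < Real.Angle.cos (n • θ i) := by
  set U : Set (ι → Real.Angle) := {φ | ∀ i, 0 < Real.Angle.cos (φ i)}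
  have hU : U ∈ 𝓝 0 := by
    refine IsOpen.mem_nhds ?_ fun i => by simp
    simp only [U, ofPred_forall]
    exact isOpen_iInter_of_finite fun i =>
      isOpen_lt continuous_const (Real.Angle.continuous_cos.comp (continuous_apply i))
  exact frequently_atTop.1 (mapClusterPt_iff_frequently.1 (mapClusterPt_zero_atTop_nsmul θ) U hU) 1

theorem Complex.exists_pos_forall_re_pow_pos {ι : Type*} [Finite ι] (z : ι → ℂ)
    (hz : ∀ i, z i ≠ 0) : ∃ n : ℕ, 0 < n ∧ ∀ i, 0 < (z i ^ n).re := by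
  obtain ⟨n, hn, hcos⟩ :=
    Real.Angle.exists_pos_forall_cos_nsmul_pos fun i => (arg (z i) : Real.Angle)
  refine ⟨n, hn, fun i => ?_⟩
  rw [← norm_mul_cos_arg, ← Real.Angle.cos_coe, arg_pow_coe_angle]
  exact mul_pos (norm_pos_iff.2 (pow_ne_zero n (hz i))) (hcos i)

theorem Fintype.sum_comp_lt_sum_of_not_surjective {κ σ M : Type*} [Fintype κ] [Fintype σ]
    [AddCommMonoid M] [PartialOrder M] [IsOrderedCancelAddMonoid M] {ι : κ → σ}
    (hι : Injective ι) (hsurj : ¬ Surjective ι) {f : σ → M} (hf : ∀ i, 0 < f i) :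
    ∑ j, f (ι j) < ∑ i, f i := by
  classical
  obtain ⟨i, hi⟩ := not_forall.1 hsurj
  rw [← Finset.sum_image fun a _ b _ hab => hι hab]
  exact Finset.sum_lt_sum_of_subset (Finset.subset_univ _) (Finset.mem_univ i) (by simpa using hi)
    (hf i) fun j _ _ => (hf j).le

theorem eigenvalue_multiset_comparison_general (q : ℝ) (hq : 1 < q) (s t : ℕ)
    (α : Fin s → ℂ) (β : Fin t → ℂ)
    (hα : ∀ i, ‖α i‖ = Real.sqrt q)
    (hsub : ∃ ι : Fin t → Fin s, Function.Injective ι ∧ ∀ j, β j = α (ι j))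
    (h : ∀ n : ℕ, 1 ≤ n →
      (∑ i, ((α i) ^ n).re) - (∑ j, ((β j) ^ n).re) ≤ 0) :
    s = t := by
  obtain ⟨ι, hι, hβ⟩ := hsub
  by_contra hst
  have hα0 : ∀ i, α i ≠ 0 := fun i =>
    norm_pos_iff.1 (by rw [hα]; exact Real.sqrt_pos.2 (by linarith))
  have hsurj : ¬ Surjective ι := fun hs =>
    hst (by simpa using (Fintype.card_of_bijective ⟨hι, hs⟩).symm)
  obtain ⟨n, hn, hpos⟩ := Complex.exists_pos_forall_re_pow_pos α hα0
  have hlt := Fintype.sum_comp_lt_sum_of_not_surjective hι hsurj (f := fun i => (α i ^ n).re) hpos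
  have hle := h n hn
  simp only [hβ] at hle
  linarith

theorem eigenvalue_multiset_comparison (q : ℝ) (hq : 1 < q) (s t : ℕ)
    (α : Fin s → ℂ) (β : Fin t → ℂ)
    (hα : ∀ i, ‖α i‖ = Real.sqrt q)
    (hβ : ∀ j, ‖β j‖ = Real.sqrt q)
    (hsub : ∃ ι : Fin t → Fin s, Function.Injective ι ∧ ∀ j, β j = α (ι j))
    (h : ∀ n : ℕ, 1 ≤ n →
      (∑ i, ((α i) ^ n).re) - (∑ j, ((β j) ^ n).re) ≤ 0) :
    s = t :=
  eigenvalue_multiset_comparison_general q hq s t α β hα hsub h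
end
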